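/- Let a_0, a_1, a_2, ... be i.i.d. complex random variables with 𝔼[log(1 + |a_0|)] < ∞, |a_0| not almost surely constant, and ℙ(a_0 = 0) = 0. Let x_1^(n) = min_k |z_k^(n)| be the smallest root modulus of P_n(z) = ∑_{k=0}^n a_k z^k, and let x_1^(∞) be the infimum of the set {|z| : z ∈ D(0,1), P_∞(z) = 0} ∪ {1}, where P_∞(z) = ∑_{k=0}^∞ a_k z^k. Then x_1^(n) converges to x_1^(∞) almost surely as n → ∞. -/

import Mathlib

/-!
The argument is pathwise. Almost surely every `a_k` is nonzero, and two Borel–Cantelli arguments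
give: `log (1 + |a_k|) = o(k)` (from `𝔼 log (1 + |a_0|) < ∞`), so `P_n → P_∞` locally uniformly
on the unit disc; and, for some fixed `θ > 0`, every block `[m², m² + m)` eventually contains an
index `j` with `|a_j| ≥ θ` (from independence, the block missing with probability `q ^ m`).

Uniform convergence on discs `|z| ≤ r < x₁⁽∞⁾`, where `P_∞` has no zero, keeps the roots of `P_n`
out of them, and Hurwitz's theorem puts a root of `P_n` near any zero of `P_∞` in the unit disc.
What remains is to show that the roots cannot all escape beyond a radius `r > 1`: by Vieta this
would force `|a_j| r ^ j ≤ C(n, j) |a_0|` for every `j`, which fails for an index `j ≥ n - 4√n`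
with `|a_j| ≥ θ`, because `√n log n = o(n)`.
-/

open MeasureTheory ProbabilityTheory Polynomial Filter

/-- The random Kac polynomial `P_n(z) = ∑_{k=0}^n a_k z^k`. -/
noncomputable def kacPoly {Ω : Type*} (a : ℕ → Ω → ℂ) (n : ℕ) (ω : Ω) : Polynomial ℂ :=
  ∑ k ∈ Finset.range (n + 1), Polynomial.C (a k ω) * Polynomial.X ^ k

/-- The smallest modulus of a root of a complex polynomial. -/
noncomputable def minRootMod (p : Polynomial ℂ) : ℝ :=
  sInf ((‖·‖) '' {z : ℂ | z ∈ p.roots})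

/-- The largest modulus of a root of a complex polynomial. -/
noncomputable def maxRootMod (p : Polynomial ℂ) : ℝ :=
  sSup ((‖·‖) '' {z : ℂ | z ∈ p.roots})

/-- The random power series `P_∞(z) = ∑_{k=0}^∞ a_k z^k` (with junk value `0` where the
series does not converge). -/
noncomputable def kacSeries {Ω : Type*} (a : ℕ → Ω → ℂ) (ω : Ω) (z : ℂ) : ℂ :=
  ∑' k : ℕ, a k ω * z ^ k

/-- `x₁⁽∞⁾`: the infimum of the set `{|z| : z ∈ D(0,1), F z = 0} ∪ {1}`, i.e. the smallest
modulus of a zero of `F` in the open unit disk, with the convention that it equals `1` when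
`F` has no zero there. -/
noncomputable def minZeroMod (F : ℂ → ℂ) : ℝ :=
  sInf (((‖·‖) '' {z : ℂ | ‖z‖ < 1 ∧ F z = 0}) ∪ {1})

open Metric Topology
open scoped ENNReal

lemma minRootMod_le {p : ℂ[X]} (hp : p ≠ 0) {z : ℂ} (hz : p.IsRoot z) : minRootMod p ≤ ‖z‖ :=
  csInf_le ((p.roots.finite_toSet.image _).bddBelow) ⟨z, (mem_roots hp).2 hz, rfl⟩

lemma exists_mem_roots_norm_eq_minRootMod {p : ℂ[X]} (hp : p.roots ≠ 0) :
    ∃ z ∈ p.roots, ‖z‖ = minRootMod p := by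
  obtain ⟨z, hz⟩ := Multiset.exists_mem_of_ne_zero hp
  obtain ⟨w, hw, hmin⟩ :=
    (Set.Nonempty.image _ ⟨z, hz⟩).csInf_mem (p.roots.finite_toSet.image (‖·‖))
  exact ⟨w, hw, hmin⟩

lemma bddBelow_minZeroMod_set (F : ℂ → ℂ) :
    BddBelow (((‖·‖) '' {z : ℂ | ‖z‖ < 1 ∧ F z = 0}) ∪ {1}) :=
  ⟨0, by rintro _ (⟨z, -, rfl⟩ | rfl) <;> simp⟩

lemma minZeroMod_le_one (F : ℂ → ℂ) : minZeroMod F ≤ 1 :=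
  csInf_le (bddBelow_minZeroMod_set F) (Or.inr rfl)

lemma apply_ne_zero_of_norm_lt_minZeroMod {F : ℂ → ℂ} {z : ℂ} (hz : ‖z‖ < minZeroMod F) :
    F z ≠ 0 := fun hFz => (csInf_le (bddBelow_minZeroMod_set F)
    (Or.inl ⟨z, ⟨hz.trans_le (minZeroMod_le_one F), hFz⟩, rfl⟩)).not_gt hz

lemma exists_zero_of_minZeroMod_lt {F : ℂ → ℂ} {b : ℝ} (hb : minZeroMod F < b) (hb1 : b ≤ 1) :
    ∃ z, ‖z‖ < b ∧ F z = 0 := by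
  unfold minZeroMod at hb
  obtain ⟨_, ⟨z, ⟨-, hFz⟩, rfl⟩ | rfl, hzb⟩ :=
    exists_lt_of_csInf_lt (Set.union_nonempty.2 (Or.inr (Set.singleton_nonempty 1))) hb
  · exact ⟨z, hzb, hFz⟩
  · exact absurd hb1 hzb.not_ge

/-- Vieta's bound `coeff_le_of_roots_le`, applied to the reversed polynomial, whose roots are the
inverses of those of `p`. -/
theorem Polynomial.norm_coeff_mul_pow_le_of_forall_le_norm_root {p : ℂ[X]} (h0 : p.coeff 0 ≠ 0)
    {R : ℝ} (hR : 0 < R) (hroots : ∀ z ∈ p.roots, R ≤ ‖z‖) (j : ℕ) :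
    ‖p.coeff j‖ * R ^ j ≤ p.natDegree.choose j * ‖p.coeff 0‖ := by
  set N := p.natDegree
  have hp : p ≠ 0 := fun h => h0 (by simp [h])
  have htrail : p.natTrailingDegree = 0 := natTrailingDegree_eq_zero.2 (Or.inr h0)
  set q := C (p.coeff 0)⁻¹ * p.reverse
  have hq_monic : q.Monic := by
    rw [Monic, leadingCoeff_mul, leadingCoeff_C, reverse_leadingCoeff, trailingCoeff, htrail,
      inv_mul_cancel₀ h0]
  have hq_deg : q.natDegree = N := by
    rw [natDegree_C_mul (inv_ne_zero h0), reverse_natDegree, htrail, Nat.sub_zero]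
  have hq_roots : ∀ z ∈ (q.map (RingHom.id ℂ)).roots, ‖z‖ ≤ R⁻¹ := by
    intro z hz
    rw [map_id, roots_C_mul _ (inv_ne_zero h0), mem_roots (by simpa [reverse_eq_zero] using hp)]
      at hz
    have hz0 : z ≠ 0 := by
      rintro rfl
      rw [IsRoot, ← coeff_zero_eq_eval_zero, coeff_zero_reverse] at hz
      exact leadingCoeff_ne_zero.2 hp hz
    let := invertibleOfNonzero (inv_ne_zero hz0)
    have hroot : p.IsRoot z⁻¹ := by
      have := (eval₂_reverse_eq_zero_iff (RingHom.id ℂ) z⁻¹ p).1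
      simp only [invOf_eq_inv, inv_inv, eval₂_id] at this
      exact this hz
    have := hroots _ ((mem_roots hp).2 hroot)
    rw [norm_inv] at this
    exact (le_inv_comm₀ hR (norm_pos_iff.2 hz0)).1 this
  rcases le_or_gt j N with hj | hj
  · have hbound := coeff_le_of_roots_le (N - j) hq_monic (IsAlgClosed.splits _) hq_roots
    rw [map_id, hq_deg, Nat.sub_sub_self hj, Nat.choose_symm hj, coeff_C_mul, coeff_reverse,
      revAt_le (Nat.sub_le N j), Nat.sub_sub_self hj, norm_mul, norm_inv, inv_pow] at hbound
    have hc : 0 < ‖p.coeff 0‖ := norm_pos_iff.2 h0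
    rw [inv_mul_le_iff₀ hc] at hbound
    calc ‖p.coeff j‖ * R ^ j ≤ ‖p.coeff 0‖ * ((R ^ j)⁻¹ * N.choose j) * R ^ j := by gcongr
      _ = N.choose j * ‖p.coeff 0‖ := by field_simp
  · simp only [coeff_eq_zero_of_natDegree_lt hj, norm_zero, zero_mul]
    positivity

lemma IsCompact.exists_pos_forall_le_norm {α E : Type*} [TopologicalSpace α]
    [NormedAddCommGroup E] {K : Set α} (hK : IsCompact K) {f : α → E} (hf : ContinuousOn f K)
    (hf0 : ∀ z ∈ K, f z ≠ 0) : ∃ m > 0, ∀ z ∈ K, m ≤ ‖f z‖ := by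
  rcases K.eq_empty_or_nonempty with rfl | hne
  · exact ⟨1, one_pos, by simp⟩
  obtain ⟨z₀, hz₀, hmin⟩ := hK.exists_isMinOn hne hf.norm
  exact ⟨‖f z₀‖, norm_pos_iff.2 (hf0 z₀ hz₀), fun z hz => hmin hz⟩

lemma TendstoUniformlyOn.eventually_forall_ne_zero {ι α E : Type*} [TopologicalSpace α]
    [NormedAddCommGroup E] {l : Filter ι} {f : ι → α → E} {F : α → E} {K : Set α}
    (hlim : TendstoUniformlyOn f F l K) (hK : IsCompact K) (hF : ContinuousOn F K)
    (hF0 : ∀ z ∈ K, F z ≠ 0) : ∀ᶠ i in l, ∀ z ∈ K, f i z ≠ 0 := by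
  obtain ⟨m, hm, hmF⟩ := hK.exists_pos_forall_le_norm hF hF0
  filter_upwards [Metric.tendstoUniformlyOn_iff.1 hlim m hm] with i hi z hz hfz
  have := hi z hz
  rw [hfz, dist_zero_right] at this
  exact (hmF z hz).not_gt this

lemma exists_mem_closedBall_eq_zero_of_norm_lt {g : ℂ → ℂ} {c : ℂ} {r m : ℝ} (hr : 0 < r)
    (hg : DiffContOnCl ℂ g (ball c r)) (hc : ‖g c‖ < m) (hm : ∀ z ∈ sphere c r, m ≤ ‖g z‖) :
    ∃ z ∈ closedBall c r, g z = 0 := by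
  by_contra! hne
  rw [← closure_ball c hr.ne'] at hne
  have hm0 : 0 < m := (norm_nonneg _).trans_lt hc
  have hinv : ‖(g c)⁻¹‖ ≤ m⁻¹ := by
    refine Complex.norm_le_of_forall_mem_frontier_norm_le isBounded_ball (hg.inv hne) ?_
      (subset_closure (mem_ball_self hr))
    rw [frontier_ball c hr.ne']
    intro z hz
    rw [Pi.inv_apply, norm_inv]
    exact inv_anti₀ hm0 (hm z hz)
  rw [norm_inv, inv_le_inv₀ (norm_pos_iff.2 (hne c (subset_closure (mem_ball_self hr)))) hm0]
    at hinv
  exact hinv.not_gt hc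

lemma TendstoUniformlyOn.eventually_exists_mem_closedBall_eq_zero {ι : Type*} {l : Filter ι}
    {f : ι → ℂ → ℂ} {F : ℂ → ℂ} {c : ℂ} {r : ℝ}
    (hlim : TendstoUniformlyOn f F l (closedBall c r)) (hr : 0 < r)
    (hf : ∀ i, DiffContOnCl ℂ (f i) (ball c r)) (hF : ContinuousOn F (sphere c r))
    (hFc : F c = 0) (hF0 : ∀ z ∈ sphere c r, F z ≠ 0) :
    ∀ᶠ i in l, ∃ z ∈ closedBall c r, f i z = 0 := by
  obtain ⟨m, hm, hmF⟩ := (isCompact_sphere c r).exists_pos_forall_le_norm hF hF0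
  filter_upwards [Metric.tendstoUniformlyOn_iff.1 hlim (m / 2) (half_pos hm)] with i hi
  refine exists_mem_closedBall_eq_zero_of_norm_lt hr (hf i) (m := m / 2) ?_ fun z hz => ?_
  · simpa [dist_eq_norm, hFc] using hi c (mem_closedBall_self hr.le)
  · have := hi z (sphere_subset_closedBall hz)
    rw [dist_eq_norm] at this
    linarith [hmF z hz, norm_sub_norm_le (F z) (f i z)]

lemma AnalyticOnNhd.eventually_nhdsGT_forall_mem_sphere_ne_zero {F : ℂ → ℂ} {U : Set ℂ}
    (hF : AnalyticOnNhd ℂ F U) (hU : IsPreconnected U) {z₀ w : ℂ} (hz₀ : z₀ ∈ U) (hw : w ∈ U)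
    (hFw : F w ≠ 0) : ∀ᶠ s in 𝓝[>] (0 : ℝ), ∀ z ∈ sphere z₀ s, F z ≠ 0 := by
  have hiso : ∀ᶠ z in 𝓝[≠] z₀, F z ≠ 0 := by
    refine not_frequently.1 fun hfreq => hFw ?_
    exact hF.eqOn_zero_of_preconnected_of_frequently_eq_zero hU hz₀ hfreq hw
  obtain ⟨r₀, hr₀, hball⟩ := Metric.eventually_nhds_iff.1 (eventually_nhdsWithin_iff.1 hiso)
  filter_upwards [Ioo_mem_nhdsGT hr₀] with s hs z hz
  rw [mem_sphere] at hz
  exact hball (hz.trans_lt hs.2) fun h => hs.1.ne' (by rwa [h, dist_self, eq_comm] at hz)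

lemma eventually_natCast_mul_pow_mul_lt {w : ℕ → ℕ}
    (hw : (fun n => (w n : ℝ) * Real.log n) =o[atTop] (fun n => (n : ℝ))) {R θ C : ℝ}
    (hR : 1 < R) (hθ : 0 < θ) (hC : 0 < C) :
    ∀ᶠ n : ℕ in atTop, ((n : ℝ) * R) ^ w n * C < θ * R ^ n := by
  have hb : 0 < Real.log R := Real.log_pos hR
  set c := Real.log R / (2 * (1 + Real.log R)) with hc
  have hsmall : ∀ᶠ n : ℕ in atTop, (w n : ℝ) * Real.log n ≤ c * n := by
    filter_upwards [hw.bound (show 0 < c by positivity)] with n hn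
    rw [Real.norm_eq_abs, Real.norm_natCast] at hn
    exact (le_abs_self _).trans hn
  have hlarge : ∀ᶠ n : ℕ in atTop, Real.log C - Real.log θ < Real.log R / 2 * n :=
    ((tendsto_natCast_atTop_atTop (R := ℝ)).const_mul_atTop (by positivity)).eventually_gt_atTop _
  filter_upwards [hsmall, hlarge,
    (tendsto_natCast_atTop_atTop (R := ℝ)).eventually_ge_atTop (Real.exp 1)] with n hsmall hlarge he
  have hn : 0 < (n : ℝ) := (Real.exp_pos 1).trans_le he
  have hlog_n : 1 ≤ Real.log n := (Real.le_log_iff_exp_le hn).2 he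
  rw [← Real.log_lt_log_iff (by positivity) (by positivity), Real.log_mul (by positivity) hC.ne',
    Real.log_mul hθ.ne' (by positivity), Real.log_pow, Real.log_pow,
    Real.log_mul hn.ne' (by positivity)]
  have hw_le : (w n : ℝ) ≤ w n * Real.log n := le_mul_of_one_le_right (by positivity) hlog_n
  have : (w n : ℝ) * (Real.log n + Real.log R) ≤ Real.log R / 2 * n := by
    calc (w n : ℝ) * (Real.log n + Real.log R)
        ≤ (w n : ℝ) * Real.log n * (1 + Real.log R) := by nlinarith
      _ ≤ c * n * (1 + Real.log R) := by gcongr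
      _ = Real.log R / 2 * n := by rw [hc]; field_simp
  linarith

lemma isLittleO_four_mul_sqrt_mul_log :
    (fun n : ℕ => ((4 * n.sqrt : ℕ) : ℝ) * Real.log n) =o[atTop] (fun n => (n : ℝ)) := by
  have hreal : (fun x : ℝ => √x * Real.log x) =o[atTop] id := by
    refine ((Asymptotics.isBigO_refl Real.sqrt atTop).mul_isLittleO
      (isLittleO_log_rpow_atTop (by norm_num : (0 : ℝ) < 1 / 2))).congr' .rfl ?_
    filter_upwards [eventually_ge_atTop 0] with x hx
    rw [← Real.sqrt_eq_rpow, Real.mul_self_sqrt hx, id]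
  refine Asymptotics.IsBigO.trans_isLittleO (g := fun n : ℕ => √(n : ℝ) * Real.log n) ?_
    (hreal.comp_tendsto tendsto_natCast_atTop_atTop)
  refine Asymptotics.IsBigO.of_bound 4 (.of_forall fun n => ?_)
  have hlog := Real.log_natCast_nonneg n
  rw [Real.norm_of_nonneg (by positivity), Real.norm_of_nonneg (by positivity)]
  push_cast
  rw [mul_assoc]
  gcongr
  exact Real.nat_sqrt_le_real_sqrt

lemma eventually_exists_le_add_four_mul_sqrt {Q : ℕ → Prop}
    (h : ∀ᶠ m in atTop, ∃ j ∈ Finset.Ico (m ^ 2) (m ^ 2 + m), Q j) :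
    ∀ᶠ n in atTop, ∃ j ≤ n, n ≤ j + 4 * n.sqrt ∧ Q j := by
  obtain ⟨M, hM⟩ := eventually_atTop.1 h
  filter_upwards [eventually_ge_atTop ((M + 1) ^ 2)] with n hn
  have hsqrt : M + 1 ≤ n.sqrt := Nat.le_sqrt'.2 hn
  obtain ⟨m, hm⟩ : ∃ m, n.sqrt = m + 1 := ⟨n.sqrt - 1, by omega⟩
  have hlo := Nat.sqrt_le' n
  have hhi := Nat.lt_succ_sqrt' n
  rw [hm] at hlo hhi ⊢
  obtain ⟨j, hj, hQ⟩ := hM m (by omega)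
  rw [Finset.mem_Ico] at hj
  refine ⟨j, ?_, ?_, hQ⟩ <;> nlinarith

lemma summable_norm_mul_pow_of_eventually_log_le {E : Type*} [SeminormedAddCommGroup E]
    {A : ℕ → E} (hA : ∀ δ > 0, ∀ᶠ k in atTop, Real.log (1 + ‖A k‖) ≤ δ * k) {ρ : ℝ}
    (hρ0 : 0 ≤ ρ) (hρ1 : ρ < 1) : Summable fun k => ‖A k‖ * ρ ^ k := by
  have hb : 1 < 2 / (1 + ρ) := by rw [one_lt_div (by positivity)]; linarith
  refine Summable.of_norm_bounded_eventually_nat (g := fun k => (2 / (1 + ρ) * ρ) ^ k)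
    (summable_geometric_of_lt_one (by positivity) ?_) ?_
  · rw [div_mul_eq_mul_div, div_lt_one (by positivity)]
    linarith
  filter_upwards [hA _ (Real.log_pos hb)] with k hk
  have hAk : ‖A k‖ ≤ (2 / (1 + ρ)) ^ k := by
    rw [mul_comm, ← Real.log_pow, Real.log_le_log_iff (by positivity) (by positivity)] at hk
    linarith
  rw [Real.norm_of_nonneg (by positivity), mul_pow]
  gcongr

section Kac

variable {Ω : Type*} {a : ℕ → Ω → ℂ} {ω : Ω}

lemma coeff_kacPoly (n j : ℕ) : (kacPoly a n ω).coeff j = if j ≤ n then a j ω else 0 := by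
  simp [kacPoly, finsetSum_coeff, coeff_X_pow]

lemma eval_kacPoly (n : ℕ) (z : ℂ) :
    (kacPoly a n ω).eval z = ∑ k ∈ Finset.range (n + 1), a k ω * z ^ k := by
  simp [kacPoly, eval_finsetSum]

lemma natDegree_kacPoly {n : ℕ} (hn : a n ω ≠ 0) : (kacPoly a n ω).natDegree = n :=
  natDegree_eq_of_le_of_coeff_ne_zero
    (natDegree_le_iff_coeff_eq_zero.2 fun j hj => by simp [coeff_kacPoly, not_le.2 hj])
    (by simpa [coeff_kacPoly] using hn)

lemma kacSeries_zero : kacSeries a ω 0 = a 0 ω := by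
  rw [kacSeries, tsum_eq_single 0 fun k hk => by simp [hk]]
  simp

lemma kacPoly_ne_zero (h0 : a 0 ω ≠ 0) (n : ℕ) : kacPoly a n ω ≠ 0 := fun h => h0 <| by
  simpa [h, eq_comm] using coeff_kacPoly (a := a) (ω := ω) n 0

lemma roots_kacPoly_ne_zero {n : ℕ} (hn : a n ω ≠ 0) (hn0 : n ≠ 0) :
    (kacPoly a n ω).roots ≠ 0 := by
  rw [← Multiset.card_pos, ← (IsAlgClosed.splits _).natDegree_eq_card_roots, natDegree_kacPoly hn]
  exact Nat.pos_of_ne_zero hn0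

lemma eventually_minRootMod_kacPoly_lt_of_one_lt (hA : ∀ k, a k ω ≠ 0) {w : ℕ → ℕ}
    (hw : (fun n => (w n : ℝ) * Real.log n) =o[atTop] (fun n => (n : ℝ))) {θ : ℝ} (hθ : 0 < θ)
    (hwin : ∀ᶠ n in atTop, ∃ j ≤ n, n ≤ j + w n ∧ θ ≤ ‖a j ω‖) {r : ℝ} (hr : 1 < r) :
    ∀ᶠ n in atTop, minRootMod (kacPoly a n ω) < r := by
  filter_upwards [hwin, eventually_natCast_mul_pow_mul_lt hw hr hθ (norm_pos_iff.2 (hA 0)),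
    eventually_ge_atTop 1] with n ⟨j, hjn, hjw, hθj⟩ hlt hn1
  by_contra! hge
  have hcoeff := norm_coeff_mul_pow_le_of_forall_le_norm_root
    (by simpa [coeff_kacPoly] using hA 0) (zero_lt_one.trans hr)
    (fun z hz => hge.trans (minRootMod_le (ne_zero_of_mem_roots hz) (isRoot_of_mem_roots hz))) j
  rw [natDegree_kacPoly (hA n), coeff_kacPoly, if_pos hjn, coeff_kacPoly, if_pos n.zero_le]
    at hcoeff
  have hchoose : (n.choose j : ℝ) ≤ (n : ℝ) ^ (n - j) := by
    rw [← Nat.choose_symm hjn]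
    exact_mod_cast Nat.choose_le_pow n (n - j)
  have hnr : 1 ≤ (n : ℝ) * r := one_le_mul_of_one_le_of_one_le (by exact_mod_cast hn1) hr.le
  have : θ * r ^ n ≤ ((n : ℝ) * r) ^ w n * ‖a 0 ω‖ :=
    calc θ * r ^ n = θ * r ^ j * r ^ (n - j) := by
          rw [mul_assoc, ← pow_add, Nat.add_sub_cancel' hjn]
      _ ≤ ‖a j ω‖ * r ^ j * r ^ (n - j) := by gcongr
      _ ≤ n.choose j * ‖a 0 ω‖ * r ^ (n - j) := by gcongr
      _ ≤ (n : ℝ) ^ (n - j) * ‖a 0 ω‖ * r ^ (n - j) := by gcongr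
      _ = ((n : ℝ) * r) ^ (n - j) * ‖a 0 ω‖ := by ring
      _ ≤ ((n : ℝ) * r) ^ w n * ‖a 0 ω‖ := by gcongr; omega
  linarith

variable (hsum : ∀ ρ : ℝ, 0 ≤ ρ → ρ < 1 → Summable fun k => ‖a k ω‖ * ρ ^ k)
include hsum

lemma tendstoUniformlyOn_kacPoly {ρ : ℝ} (hρ : ρ < 1) :
    TendstoUniformlyOn (fun n z => (kacPoly a n ω).eval z) (kacSeries a ω) atTop
      (closedBall 0 ρ) := by
  rcases lt_or_ge ρ 0 with hρ0 | hρ0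
  · simpa [closedBall_eq_empty.2 hρ0] using tendstoUniformlyOn_empty
  have hpartial := tendstoUniformlyOn_tsum_nat (hsum ρ hρ0 hρ) (f := fun k z => a k ω * z ^ k)
    (s := closedBall 0 ρ) fun k z hz => by
      rw [norm_mul, norm_pow]
      gcongr
      simpa using hz
  simp only [eval_kacPoly]
  exact hpartial.seq_tendstoUniformlyOn _ (tendsto_add_atTop_nat 1)

lemma differentiableOn_kacSeries : DifferentiableOn ℂ (kacSeries a ω) (ball 0 1) := by
  refine TendstoLocallyUniformlyOn.differentiableOn (φ := atTop)
    (F := fun n z => (kacPoly a n ω).eval z) ?_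
    (.of_forall fun n => (kacPoly a n ω).differentiable.differentiableOn) isOpen_ball
  refine ((tendstoLocallyUniformlyOn_TFAE _ _ _ isOpen_ball).out 0 2).2 fun z hz => ?_
  have hρ : (‖z‖ + 1) / 2 < 1 := by rw [mem_ball_zero_iff] at hz; linarith
  refine ⟨closedBall 0 ((‖z‖ + 1) / 2), nhdsWithin_le_nhds (closedBall_mem_nhds_of_mem ?_),
    tendstoUniformlyOn_kacPoly hsum hρ⟩
  rw [mem_ball_zero_iff] at hz ⊢
  linarith

lemma eventually_lt_minRootMod_kacPoly (hA : ∀ k, a k ω ≠ 0) {r : ℝ}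
    (hr : r < minZeroMod (kacSeries a ω)) : ∀ᶠ n in atTop, r < minRootMod (kacPoly a n ω) := by
  have hr1 : r < 1 := hr.trans_le (minZeroMod_le_one _)
  have hF0 : ∀ z ∈ closedBall (0 : ℂ) r, kacSeries a ω z ≠ 0 := fun z hz =>
    apply_ne_zero_of_norm_lt_minZeroMod ((mem_closedBall_zero_iff.1 hz).trans_lt hr)
  filter_upwards [(tendstoUniformlyOn_kacPoly hsum hr1).eventually_forall_ne_zero
      (isCompact_closedBall 0 r)
      ((differentiableOn_kacSeries hsum).continuousOn.mono (closedBall_subset_ball hr1)) hF0,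
    eventually_ne_atTop 0] with n hn hn0
  obtain ⟨z, hz, hzmin⟩ := exists_mem_roots_norm_eq_minRootMod (roots_kacPoly_ne_zero (hA n) hn0)
  rw [← hzmin]
  by_contra! hzr
  exact hn z (mem_closedBall_zero_iff.2 hzr) (isRoot_of_mem_roots hz)

lemma eventually_minRootMod_kacPoly_lt_of_le_one (h0 : a 0 ω ≠ 0) {r : ℝ}
    (hr : minZeroMod (kacSeries a ω) < r) (hr1 : r ≤ 1) :
    ∀ᶠ n in atTop, minRootMod (kacPoly a n ω) < r := by
  obtain ⟨z₀, hz₀r, hFz₀⟩ := exists_zero_of_minZeroMod_lt hr hr1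
  have hF := differentiableOn_kacSeries hsum
  have hz₀ : z₀ ∈ ball (0 : ℂ) 1 := mem_ball_zero_iff.2 (hz₀r.trans_le hr1)
  obtain ⟨s, hsph, hs⟩ :=
    ((hF.analyticOnNhd isOpen_ball).eventually_nhdsGT_forall_mem_sphere_ne_zero
      (convex_ball 0 1).isPreconnected hz₀ (mem_ball_self one_pos) (by rwa [kacSeries_zero])
      |>.and (Ioo_mem_nhdsGT (sub_pos.2 hz₀r))).exists
  have hρ : ‖z₀‖ + s < r := by linarith [hs.2]
  have hsub : closedBall z₀ s ⊆ closedBall 0 (‖z₀‖ + s) :=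
    closedBall_subset_closedBall' (by rw [dist_zero_right, add_comm])
  filter_upwards [((tendstoUniformlyOn_kacPoly hsum (hρ.trans_le hr1)).mono hsub
    ).eventually_exists_mem_closedBall_eq_zero hs.1
    (fun n => (kacPoly a n ω).differentiable.diffContOnCl)
    (hF.continuousOn.mono (sphere_subset_closedBall.trans (hsub.trans
      (closedBall_subset_ball (hρ.trans_le hr1))))) hFz₀ hsph] with n ⟨z, hz, hPz⟩
  calc minRootMod (kacPoly a n ω) ≤ ‖z‖ := minRootMod_le (kacPoly_ne_zero h0 n) hPz
    _ ≤ ‖z₀‖ + s := norm_le_norm_add_const_of_dist_le hz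
    _ < r := hρ

theorem tendsto_minRootMod_kacPoly (hA : ∀ k, a k ω ≠ 0) {w : ℕ → ℕ}
    (hw : (fun n => (w n : ℝ) * Real.log n) =o[atTop] (fun n => (n : ℝ))) {θ : ℝ} (hθ : 0 < θ)
    (hwin : ∀ᶠ n in atTop, ∃ j ≤ n, n ≤ j + w n ∧ θ ≤ ‖a j ω‖) :
    Tendsto (fun n => minRootMod (kacPoly a n ω)) atTop (𝓝 (minZeroMod (kacSeries a ω))) := by
  refine tendsto_order.2 ⟨fun r hr => eventually_lt_minRootMod_kacPoly hsum hA hr, fun r hr => ?_⟩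
  rcases le_or_gt r 1 with hr1 | hr1
  · exact eventually_minRootMod_kacPoly_lt_of_le_one hsum (hA 0) hr hr1
  · exact eventually_minRootMod_kacPoly_lt_of_one_lt hA hw hθ hwin hr1

end Kac

section Probability

variable {Ω : Type*} [MeasurableSpace Ω] {μ : Measure Ω}

lemma ae_eventually_le_natCast [IsProbabilityMeasure μ] {Y : ℕ → Ω → ℝ}
    (hY : ∀ k, IdentDistrib (Y k) (Y 0) μ μ) (hint : Integrable (Y 0) μ) (hnn : 0 ≤ Y 0) :
    ∀ᵐ ω ∂μ, ∀ᶠ k in atTop, Y k ω ≤ k := by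
  have hsum : ∑' k : ℕ, μ {ω | Y k ω ∈ Set.Ioi (k : ℝ)} ≠ ⊤ := by
    let : MeasureSpace Ω := ⟨μ⟩
    have hdistrib : ∀ k : ℕ, μ {ω | Y k ω ∈ Set.Ioi (k : ℝ)} = μ {ω | Y 0 ω ∈ Set.Ioi (k : ℝ)} :=
      fun k => (hY k).measure_mem_eq measurableSet_Ioi
    rw [tsum_congr hdistrib]
    exact (tsum_prob_mem_Ioi_lt_top hint hnn).ne
  filter_upwards [ae_eventually_notMem hsum] with ω hω
  filter_upwards [hω] with k hk
  simpa using hk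

lemma ae_forall_pos_eventually_le_mul [IsProbabilityMeasure μ] {X : ℕ → Ω → ℝ}
    (hX : ∀ k, IdentDistrib (X k) (X 0) μ μ) (hint : Integrable (X 0) μ) (hnn : 0 ≤ X 0) :
    ∀ᵐ ω ∂μ, ∀ δ > 0, ∀ᶠ k in atTop, X k ω ≤ δ * k := by
  have h : ∀ᵐ ω ∂μ, ∀ i : ℕ, ∀ᶠ k in atTop, ((i : ℝ) + 1) * X k ω ≤ k := ae_all_iff.2 fun i =>
    ae_eventually_le_natCast (fun k => (hX k).comp (measurable_const_mul _))
      (hint.const_mul _) fun ω => mul_nonneg (by positivity) (hnn ω)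
  filter_upwards [h] with ω hω δ hδ
  obtain ⟨i, hi⟩ := exists_nat_one_div_lt hδ
  filter_upwards [hω i] with k hk
  calc X k ω ≤ 1 / ((i : ℝ) + 1) * k := by
        rwa [one_div_mul_eq_div, le_div_iff₀' (by positivity)]
    _ ≤ δ * k := by gcongr

lemma exists_pos_measure_norm_lt_lt [IsFiniteMeasure μ] {E : Type*} [NormedAddCommGroup E]
    [MeasurableSpace E] [OpensMeasurableSpace E] {X : Ω → E} (hX : AEMeasurable X μ)
    {c : ℝ≥0∞} (hc : μ {ω | X ω = 0} < c) :
    ∃ θ > 0, μ {ω | ‖X ω‖ < θ} < c := by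
  have hinter : ⋂ i : ℕ, {ω | ‖X ω‖ < 1 / ((i : ℝ) + 1)} = {ω | X ω = 0} := by
    ext ω
    simp only [Set.mem_iInter, Set.mem_ofPred_eq]
    refine ⟨fun h => norm_eq_zero.1 (le_antisymm ?_ (norm_nonneg _)), fun h i => ?_⟩
    · refine le_of_forall_pos_lt_add fun ε hε => ?_
      obtain ⟨i, hi⟩ := exists_nat_one_div_lt hε
      simpa using (h i).trans hi
    · rw [h, norm_zero]
      positivity
  have hlim := tendsto_measure_iInter_atTop (μ := μ)
    (s := fun i : ℕ => {ω | ‖X ω‖ < 1 / ((i : ℝ) + 1)})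
    (fun i => nullMeasurableSet_lt hX.norm aemeasurable_const)
    (fun i j hij ω (hω : ‖X ω‖ < _) => hω.trans_le (Nat.one_div_le_one_div hij))
    ⟨0, measure_ne_top _ _⟩
  rw [hinter] at hlim
  obtain ⟨i, hi⟩ := (hlim.eventually (gt_mem_nhds hc)).exists
  exact ⟨1 / ((i : ℝ) + 1), by positivity, hi⟩

lemma ae_eventually_exists_mem_notMem {β : Type*} [MeasurableSpace β] {X : ℕ → Ω → β}
    (hindep : iIndepFun X μ) (hid : ∀ k, IdentDistrib (X k) (X 0) μ μ) {T : Set β}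
    (hT : MeasurableSet T) (hq : μ (X 0 ⁻¹' T) < 1) {I : ℕ → Finset ℕ} (hI : ∀ m, m ≤ (I m).card) :
    ∀ᵐ ω ∂μ, ∀ᶠ m in atTop, ∃ j ∈ I m, X j ω ∉ T := by
  have hE : ∀ m, μ (⋂ j ∈ I m, X j ⁻¹' T) ≤ μ (X 0 ⁻¹' T) ^ m := fun m => by
    rw [hindep.measure_inter_preimage_eq_mul _ fun _ _ => hT,
      Finset.prod_congr rfl fun j _ => (hid j).measure_mem_eq hT, Finset.prod_const]
    exact pow_le_pow_of_le_one zero_le hq.le (hI m)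
  have hsum : ∑' m, μ (⋂ j ∈ I m, X j ⁻¹' T) ≠ ⊤ := by
    refine ne_top_of_le_ne_top ?_ (ENNReal.tsum_le_tsum hE)
    rw [ENNReal.tsum_geometric, Ne, ENNReal.inv_eq_top, tsub_eq_zero_iff_le, not_le]
    exact hq
  filter_upwards [ae_eventually_notMem hsum] with ω hω
  filter_upwards [hω] with m hm
  simpa using hm

end Probability

theorem minRootMod_tendsto_ae_general
    {Ω : Type*} [MeasurableSpace Ω] (μ : Measure Ω) [IsProbabilityMeasure μ]
    (a : ℕ → Ω → ℂ)
    (hindep : iIndepFun a μ)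
    (hid : ∀ k, IdentDistrib (a k) (a 0) μ μ)
    (hlog : Integrable (fun ω => Real.log (1 + ‖a 0 ω‖)) μ)
    (h0 : μ {ω | a 0 ω = 0} = 0) :
    ∀ᵐ ω ∂μ,
      Tendsto (fun n : ℕ => minRootMod (kacPoly a n ω)) atTop
        (nhds (minZeroMod (kacSeries a ω))) := by
  obtain ⟨θ, hθ, hsmall⟩ := exists_pos_measure_norm_lt_lt (hid 0).aemeasurable_fst
    (h0.trans_lt one_pos)
  have hnonzero : ∀ᵐ ω ∂μ, ∀ k, a k ω ≠ 0 := ae_all_iff.2 fun k =>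
    measure_eq_zero_iff_ae_notMem.1 (((hid k).measure_mem_eq (measurableSet_singleton 0)).trans h0)
  have hgrowth := ae_forall_pos_eventually_le_mul
    (X := fun k ω => Real.log (1 + ‖a k ω‖))
    (fun k => (hid k).comp (Real.measurable_log.comp (measurable_const.add measurable_norm)))
    hlog fun ω => Real.log_nonneg (by simp)
  have hwindows := ae_eventually_exists_mem_notMem hindep hid
    (measurableSet_lt measurable_norm measurable_const) hsmall
    (I := fun m => Finset.Ico (m ^ 2) (m ^ 2 + m)) (by simp)
  filter_upwards [hnonzero, hgrowth, hwindows] with ω hnonzero hgrowth hwindows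
  refine tendsto_minRootMod_kacPoly
    (fun ρ hρ0 hρ1 => summable_norm_mul_pow_of_eventually_log_le hgrowth hρ0 hρ1) hnonzero
    isLittleO_four_mul_sqrt_mul_log hθ (eventually_exists_le_add_four_mul_sqrt ?_)
  simpa using hwindows

/-- For i.i.d. complex coefficients with `𝔼[log(1+|a₀|)] < ∞`, `|a₀|` not
a.s. constant and `ℙ(a₀ = 0) = 0`, the smallest root modulus `x₁⁽ⁿ⁾` of the Kac polynomial
`P_n` converges almost surely to `x₁⁽∞⁾`, the infimum of the moduli of the zeros of `P_∞`
in the open unit disk (with the convention `x₁⁽∞⁾ = 1` if there is no such zero). -/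
theorem minRootMod_tendsto_ae
    {Ω : Type*} [MeasurableSpace Ω] (μ : Measure Ω) [IsProbabilityMeasure μ]
    (a : ℕ → Ω → ℂ) (hmeas : ∀ k, Measurable (a k))
    (hindep : iIndepFun a μ)
    (hid : ∀ k, IdentDistrib (a k) (a 0) μ μ)
    (hlog : Integrable (fun ω => Real.log (1 + ‖a 0 ω‖)) μ)
    (hnc : ¬ ∃ c : ℝ, 0 ≤ c ∧ μ {ω | ‖a 0 ω‖ = c} = 1)
    (h0 : μ {ω | a 0 ω = 0} = 0) :
    ∀ᵐ ω ∂μ,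
      Tendsto (fun n : ℕ => minRootMod (kacPoly a n ω)) atTop
        (nhds (minZeroMod (kacSeries a ω))) :=
  minRootMod_tendsto_ae_general μ a hindep hid hlog h0
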